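/- The Korányi norm on the Heisenberg group satisfies the triangle inequality |x·y| ≤ |x| + |y| for all x, y ∈ ℍⁿ. -/

import Mathlib

/-- The Heisenberg group `ℍⁿ = ℂⁿ × ℝ` product. -/
noncomputable def Hmul {n : ℕ} (x y : (Fin n → ℂ) × ℝ) : (Fin n → ℂ) × ℝ :=
  (x.1 + y.1, x.2 + y.2 + (1 / 2) * (∑ j, x.1 j * (starRingEnd ℂ) (y.1 j)).im)

/-- The Korányi norm `|(z,t)| = (|z|⁴ + t²)^{1/4}`. -/
noncomputable def koranyiNorm {n : ℕ} (x : (Fin n → ℂ) × ℝ) : ℝ :=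
  ((∑ j, ‖x.1 j‖ ^ 2) ^ 2 + x.2 ^ 2) ^ ((1 : ℝ) / 4)

/-!
Send `x = (z, t)` to the complex number `ζ(x) = |z|² + i t`, so that `|x| = √|ζ(x)|`. Writing
`c = ⟨z, w⟩` for the hermitian product, `ζ(x·y) = ζ(x) + ζ(y) + (2 Re c + i Im c / 2)`, and the last
term has modulus at most `2|c| ≤ 2|z||w| ≤ 2√(|ζ(x)||ζ(y)|)` by Cauchy–Schwarz. Hence
`|ζ(x·y)| ≤ (√|ζ(x)| + √|ζ(y)|)²`, which is the triangle inequality after taking square roots.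
-/

open Finset ComplexConjugate

namespace Koranyi

variable {n : ℕ}

theorem sqrt_norm_add_add_le {E : Type*} [SeminormedAddCommGroup E] (a b d : E)
    (hd : ‖d‖ ≤ 2 * √(‖a‖ * ‖b‖)) : √‖a + b + d‖ ≤ √‖a‖ + √‖b‖ := by
  have hsq : ‖a + b + d‖ ≤ (√‖a‖ + √‖b‖) ^ 2 := by
    rw [add_sq, Real.sq_sqrt (norm_nonneg a), Real.sq_sqrt (norm_nonneg b), mul_assoc,
      ← Real.sqrt_mul (norm_nonneg a)]
    linarith [norm_add₃_le (a := a) (b := b) (c := d)]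
  simpa [Real.sqrt_sq (by positivity : 0 ≤ √‖a‖ + √‖b‖)] using Real.sqrt_le_sqrt hsq

theorem sum_norm_add_sq (z w : Fin n → ℂ) :
    ∑ j, ‖z j + w j‖ ^ 2 = ∑ j, ‖z j‖ ^ 2 + ∑ j, ‖w j‖ ^ 2 + 2 * (∑ j, z j * conj (w j)).re := by
  simp only [Complex.sq_norm, Complex.normSq_add, Complex.re_sum, sum_add_distrib, mul_sum]

theorem norm_sum_mul_conj_sq_le (z w : Fin n → ℂ) :
    ‖∑ j, z j * conj (w j)‖ ^ 2 ≤ (∑ j, ‖z j‖ ^ 2) * ∑ j, ‖w j‖ ^ 2 := by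
  have hle : ‖∑ j, z j * conj (w j)‖ ≤ ∑ j, ‖z j‖ * ‖w j‖ :=
    (norm_sum_le _ _).trans_eq (by simp)
  calc ‖∑ j, z j * conj (w j)‖ ^ 2 ≤ (∑ j, ‖z j‖ * ‖w j‖) ^ 2 := by gcongr
    _ ≤ _ := sum_mul_sq_le_sq_mul_sq _ _ _

/-- The Cygan map `(z, t) ↦ |z|² + i t`. -/
noncomputable def lift (x : (Fin n → ℂ) × ℝ) : ℂ := ⟨∑ j, ‖x.1 j‖ ^ 2, x.2⟩

theorem sum_norm_sq_le_norm_lift (x : (Fin n → ℂ) × ℝ) : ∑ j, ‖x.1 j‖ ^ 2 ≤ ‖lift x‖ :=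
  (Complex.re_le_norm _).trans_eq' rfl

theorem koranyiNorm_eq_sqrt_norm_lift (x : (Fin n → ℂ) × ℝ) : koranyiNorm x = √‖lift x‖ := by
  rw [koranyiNorm, Complex.norm_def, Real.sqrt_eq_rpow, Real.sqrt_eq_rpow,
    ← Real.rpow_mul (Complex.normSq_nonneg _), Complex.normSq_apply, lift]
  norm_num [sq]

theorem lift_Hmul (x y : (Fin n → ℂ) × ℝ) :
    lift (Hmul x y) = lift x + lift y +
      ⟨2 * (∑ j, x.1 j * conj (y.1 j)).re, (∑ j, x.1 j * conj (y.1 j)).im / 2⟩ := by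
  apply Complex.ext
  · simp only [lift, Hmul, Pi.add_apply, Complex.add_re]
    rw [sum_norm_add_sq]
  · simp only [lift, Hmul, Complex.add_im]
    ring

theorem norm_sum_mul_conj_le_sqrt_norm_lift_mul (x y : (Fin n → ℂ) × ℝ) :
    ‖∑ j, x.1 j * conj (y.1 j)‖ ≤ √(‖lift x‖ * ‖lift y‖) := by
  refine Real.le_sqrt_of_sq_le ((norm_sum_mul_conj_sq_le x.1 y.1).trans ?_)
  exact mul_le_mul (sum_norm_sq_le_norm_lift x) (sum_norm_sq_le_norm_lift y)
    (sum_nonneg fun j _ => sq_nonneg _) (norm_nonneg _)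

theorem norm_mk_two_mul_re_im_div_two_le (c : ℂ) : ‖(⟨2 * c.re, c.im / 2⟩ : ℂ)‖ ≤ 2 * ‖c‖ := by
  rw [Complex.norm_def, Complex.norm_def, Complex.normSq_mk, Complex.normSq_apply,
    show (2 : ℝ) = √4 by norm_num, ← Real.sqrt_mul (by norm_num)]
  exact Real.sqrt_le_sqrt (by nlinarith [sq_nonneg c.im])

end Koranyi

open Koranyi in
/-- The Korányi norm satisfies the triangle inequality `|x·y| ≤ |x| + |y|`
on the Heisenberg group. -/
theorem stmt_17 {n : ℕ} (x y : (Fin n → ℂ) × ℝ) :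
    koranyiNorm (Hmul x y) ≤ koranyiNorm x + koranyiNorm y := by
  simp only [koranyiNorm_eq_sqrt_norm_lift, lift_Hmul]
  refine sqrt_norm_add_add_le _ _ _ ?_
  calc _ ≤ 2 * ‖∑ j, x.1 j * conj (y.1 j)‖ := norm_mk_two_mul_re_im_div_two_le _
    _ ≤ 2 * √(‖lift x‖ * ‖lift y‖) := by
      gcongr; exact norm_sum_mul_conj_le_sqrt_norm_lift_mul x y
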